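/- arXiv:2605.18236 — 7 statements merged into one kernel-verified Lean document; each statement's English description precedes it below -/
import Mathlib

section
/- Let z : [t₀, ∞) → ℝ^N be continuously differentiable, g : [t₀, ∞) → (0, ∞) continuously differentiable, z̄ ∈ ℝ^N, t₀ > 0 and C > 0. If ‖z(t) - z̄ + g(t)·ż(t)‖² ≤ C for all t ≥ t₀, then z is bounded on [t₀, ∞) and sup_{t ≥ t₀} ‖g(t)·ż(t)‖ < ∞. -/
/-!
Put `w = z - z̄` and `b = w + g ż`, so that `‖b‖² ≤ C`. Since `g ż = b - w`, we get
`g ⟪w, ż⟫ = ⟪w, b⟫ - ‖w‖² < 0` as soon as `‖w‖ > ‖b‖`, in particular whenever `‖w‖² > C`.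
Thus `‖w‖²` decreases whenever it exceeds `C`, and so never exceeds `max (‖w(t₀)‖²) C`.
Both bounds follow by the triangle inequality, using `g ż = b - w`.
-/

open Set

theorem le_of_hasDerivAt_neg_above {f f' : ℝ → ℝ} {a M : ℝ}
    (hf : ∀ t ∈ Ici a, HasDerivAt f (f' t) t) (hf' : ∀ t ∈ Ici a, M < f t → f' t < 0)
    (ha : f a ≤ M) : ∀ t ∈ Ici a, f t ≤ M := by
  intro t ht
  refine le_of_forall_gt_imp_ge_of_dense fun M' hM' => ?_
  refine image_le_of_deriv_right_lt_deriv_boundary (B := fun _ => M') (B' := 0)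
    (fun x hx => (hf x hx.1).continuousAt.continuousWithinAt)
    (fun x hx => (hf x hx.1).hasDerivWithinAt) (ha.trans hM'.le)
    (fun _ => hasDerivAt_const _ _) (fun x hx hfx => hf' x hx.1 (hfx ▸ hM')) ⟨ht, le_rfl⟩

section InnerProduct

variable {E : Type*} [NormedAddCommGroup E] [InnerProductSpace ℝ E]

theorem inner_neg_of_norm_add_smul_lt {w v : E} {c : ℝ} (hc : 0 < c)
    (h : ‖w + c • v‖ < ‖w‖) : inner ℝ w v < 0 := by
  have hw : 0 < ‖w‖ := (norm_nonneg _).trans_lt h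
  have : c * inner ℝ w v < 0 :=
    calc c * inner ℝ w v = inner ℝ w (w + c • v) - ‖w‖ ^ 2 := by
          rw [inner_add_right, real_inner_smul_right, real_inner_self_eq_norm_sq]; ring
      _ ≤ ‖w‖ * ‖w + c • v‖ - ‖w‖ ^ 2 := by gcongr; exact real_inner_le_norm _ _
      _ < 0 := by nlinarith
  exact neg_of_mul_neg_right this hc.le

theorem norm_sub_sq_le_max_of_norm_add_smul_deriv_sq_le {z z' : ℝ → E} {g : ℝ → ℝ} {zb : E}
    {t₀ C : ℝ} (hz : ∀ t ∈ Ici t₀, HasDerivAt z (z' t) t) (hgpos : ∀ t ∈ Ici t₀, 0 < g t)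
    (hbound : ∀ t ∈ Ici t₀, ‖z t - zb + g t • z' t‖ ^ 2 ≤ C) :
    ∀ t ∈ Ici t₀, ‖z t - zb‖ ^ 2 ≤ max (‖z t₀ - zb‖ ^ 2) C := by
  refine le_of_hasDerivAt_neg_above (fun t ht => ((hz t ht).sub_const zb).norm_sq)
    (fun t ht hM => ?_) (le_max_left _ _)
  have hlt : ‖z t - zb + g t • z' t‖ < ‖z t - zb‖ :=
    (sq_lt_sq₀ (norm_nonneg _) (norm_nonneg _)).1 <|
      (hbound t ht).trans_lt ((le_max_right _ _).trans_lt hM)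
  have := inner_neg_of_norm_add_smul_lt (hgpos t ht) hlt
  linarith

end InnerProduct

theorem stmt_3_general {N : ℕ} (t₀ C : ℝ)
    (z z' : ℝ → EuclideanSpace ℝ (Fin N)) (g : ℝ → ℝ)
    (zb : EuclideanSpace ℝ (Fin N))
    (hz : ∀ t ∈ Set.Ici t₀, HasDerivAt z (z' t) t)
    (hgpos : ∀ t ∈ Set.Ici t₀, 0 < g t)
    (hbound : ∀ t ∈ Set.Ici t₀, ‖z t - zb + g t • z' t‖ ^ 2 ≤ C) :
    (∃ M, ∀ t ∈ Set.Ici t₀, ‖z t‖ ≤ M) ∧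
      (∃ M, ∀ t ∈ Set.Ici t₀, ‖g t • z' t‖ ≤ M) := by
  set R := √(max (‖z t₀ - zb‖ ^ 2) C)
  have hw : ∀ t ∈ Ici t₀, ‖z t - zb‖ ≤ R := fun t ht =>
    Real.le_sqrt_of_sq_le (norm_sub_sq_le_max_of_norm_add_smul_deriv_sq_le hz hgpos hbound t ht)
  have hb : ∀ t ∈ Ici t₀, ‖z t - zb + g t • z' t‖ ≤ √C := fun t ht =>
    Real.le_sqrt_of_sq_le (hbound t ht)
  refine ⟨⟨‖zb‖ + R, fun t ht => ?_⟩, ⟨√C + R, fun t ht => ?_⟩⟩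
  · calc ‖z t‖ ≤ ‖zb‖ + ‖z t - zb‖ := norm_le_insert' _ _
      _ ≤ ‖zb‖ + R := by gcongr; exact hw t ht
  · calc ‖g t • z' t‖ = ‖(z t - zb + g t • z' t) - (z t - zb)‖ := by rw [add_sub_cancel_left]
      _ ≤ ‖z t - zb + g t • z' t‖ + ‖z t - zb‖ := norm_sub_le _ _
      _ ≤ √C + R := add_le_add (hb t ht) (hw t ht)

theorem stmt_3 {N : ℕ} (t₀ C : ℝ) (ht₀ : 0 < t₀) (hC : 0 < C)
    (z z' : ℝ → EuclideanSpace ℝ (Fin N)) (g g' : ℝ → ℝ)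
    (zb : EuclideanSpace ℝ (Fin N))
    (hz : ∀ t ∈ Set.Ici t₀, HasDerivAt z (z' t) t)
    (hz' : ContinuousOn z' (Set.Ici t₀))
    (hg : ∀ t ∈ Set.Ici t₀, HasDerivAt g (g' t) t)
    (hg' : ContinuousOn g' (Set.Ici t₀))
    (hgpos : ∀ t ∈ Set.Ici t₀, 0 < g t)
    (hbound : ∀ t ∈ Set.Ici t₀, ‖z t - zb + g t • z' t‖ ^ 2 ≤ C) :
    (∃ M, ∀ t ∈ Set.Ici t₀, ‖z t‖ ≤ M) ∧
      (∃ M, ∀ t ∈ Set.Ici t₀, ‖g t • z' t‖ ≤ M) :=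
  stmt_3_general t₀ C z z' g zb hz hgpos hbound
end

section
/- Let u : [t₀, ∞) → [u₀, ∞) be locally integrable with t₀ > 0 and u₀ > 0, and define R(t) := exp(∫_{t₀}^t u(s)/s ds). Let h : [t₀, ∞) → ℝ^m be locally integrable with ‖h(t)‖ → 0 as t → ∞. Then (1/R(t)) ∫_{t₀}^t (R(s)/s) h(s) ds → 0 as t → ∞. -/
/-!
Since `log R t - log R s = ∫_s^t u(σ)/σ dσ ≥ u₀ log (t / s)`, the function `R t / t ^ u₀` is
nondecreasing. Hence `R` grows
at least like `t ^ u₀`, and comparing `R s / s` with `(R t / t ^ u₀) s ^ (u₀ - 1)` gives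
`∫_T^t R(s)/s ds ≤ R(t)/u₀`. The expression is therefore a weighted Cesàro mean of `h` with
bounded total weight; splitting the integral at a time `T` after which `‖h‖ ≤ δ`, the part before
`T` is killed by `R t → ∞` and the part after is at most `δ / u₀`.
-/

open Filter Topology MeasureTheory Set

lemma MeasureTheory.LocallyIntegrableOn.div_id {u : ℝ → ℝ} {s : Set ℝ}
    (hu : LocallyIntegrableOn u s) (hs : IsLocallyClosed s) (h0 : (0 : ℝ) ∉ s) :
    LocallyIntegrableOn (fun x => u x / x) s := by
  simpa only [div_eq_mul_inv] using hu.mul_continuousOn (g := fun x => x⁻¹)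
    (ContinuousOn.inv₀ (continuousOn_id' _) fun x hx => ne_of_mem_of_not_mem hx h0) hs

lemma MeasureTheory.LocallyIntegrableOn.intervalIntegrable_of_Ici {E : Type*}
    [NormedAddCommGroup E] {f : ℝ → E} {t₀ a b : ℝ} (hf : LocallyIntegrableOn f (Ici t₀))
    (ha : t₀ ≤ a) (hb : t₀ ≤ b) :
    IntervalIntegrable f volume a b :=
  (hf.integrableOn_compact_subset (fun _ hx => (le_min ha hb).trans hx.1)
    isCompact_uIcc).intervalIntegrable

lemma mul_log_sub_log_le_integral_div {u : ℝ → ℝ} {u₀ s t : ℝ} (hs : 0 < s) (hst : s ≤ t)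
    (hub : ∀ σ ∈ Icc s t, u₀ ≤ u σ) (hint : IntervalIntegrable (fun σ => u σ / σ) volume s t) :
    u₀ * (Real.log t - Real.log s) ≤ ∫ σ in s..t, u σ / σ := by
  have h0 : (0 : ℝ) ∉ uIcc s t := by
    rw [uIcc_of_le hst]; exact fun h => hs.not_ge h.1
  calc u₀ * (Real.log t - Real.log s) = ∫ σ in s..t, u₀ * σ⁻¹ := by
        rw [intervalIntegral.integral_const_mul, integral_inv h0,
          Real.log_div (hs.trans_le hst).ne' hs.ne']
    _ ≤ ∫ σ in s..t, u σ / σ := by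
        refine intervalIntegral.integral_mono_on hst ?_ hint fun σ hσ => ?_
        · exact (continuousOn_const.mul (ContinuousOn.inv₀ (continuousOn_id' _) fun x hx =>
            ne_of_mem_of_not_mem hx h0)).intervalIntegrable
        · exact div_le_div_of_nonneg_right (hub σ hσ) (hs.trans_le hσ.1).le

lemma monotoneOn_exp_integral_div_rpow {u : ℝ → ℝ} {t₀ u₀ : ℝ} (ht₀ : 0 < t₀)
    (hu : LocallyIntegrableOn u (Ici t₀)) (hub : ∀ t ∈ Ici t₀, u₀ ≤ u t) :
    MonotoneOn (fun t => Real.exp (∫ s in t₀..t, u s / s) / t ^ u₀) (Ici t₀) := by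
  intro s hs t ht hst
  have hs₀ : 0 < s := ht₀.trans_le hs
  have hg := hu.div_id isClosed_Ici.isLocallyClosed fun h => ht₀.not_ge h
  have hgrowth := mul_log_sub_log_le_integral_div hs₀ hst (fun σ hσ => hub σ (hs.trans hσ.1))
    (hg.intervalIntegrable_of_Ici hs ht)
  rw [← intervalIntegral.integral_interval_sub_left (hg.intervalIntegrable_of_Ici le_rfl ht)
    (hg.intervalIntegrable_of_Ici le_rfl hs)] at hgrowth
  dsimp only
  simp only [Real.rpow_def_of_pos hs₀, Real.rpow_def_of_pos (hs₀.trans_le hst), ← Real.exp_sub,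
    Real.exp_le_exp]
  linarith

lemma tendsto_atTop_of_monotoneOn_div_rpow {R : ℝ → ℝ} {a t₀ : ℝ} (ha : 0 < a) (ht₀ : 0 < t₀)
    (hR : 0 < R t₀) (hmono : MonotoneOn (fun t => R t / t ^ a) (Ici t₀)) :
    Tendsto R atTop atTop := by
  refine tendsto_atTop_mono' _ ?_
    ((tendsto_rpow_atTop ha).const_mul_atTop (div_pos hR (Real.rpow_pos_of_pos ht₀ a)))
  filter_upwards [eventually_ge_atTop t₀] with t ht
  have hRt := hmono (mem_Ici.2 le_rfl) ht ht
  rwa [le_div_iff₀ (Real.rpow_pos_of_pos (ht₀.trans_le ht) a)] at hRt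

lemma integral_div_le_div_of_monotoneOn_div_rpow {R : ℝ → ℝ} {a T t : ℝ} (ha : 0 < a)
    (hT : 0 < T) (hTt : T ≤ t) (hRt : 0 ≤ R t) (hmono : MonotoneOn (fun s => R s / s ^ a) (Icc T t))
    (hint : IntervalIntegrable (fun s => R s / s) volume T t) :
    ∫ s in T..t, R s / s ≤ R t / a := by
  calc ∫ s in T..t, R s / s ≤ ∫ s in T..t, R t / t ^ a * s ^ (a - 1) := by
        refine intervalIntegral.integral_mono_on hTt hint
          ((intervalIntegral.intervalIntegrable_rpow' (by linarith)).const_mul _) fun s hs => ?_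
        have hs₀ : 0 < s := hT.trans_le hs.1
        calc R s / s = R s / s ^ a * s ^ (a - 1) := by
              rw [Real.rpow_sub_one hs₀.ne']; field_simp
          _ ≤ R t / t ^ a * s ^ (a - 1) :=
              mul_le_mul_of_nonneg_right (hmono hs (right_mem_Icc.2 hTt) hs.2)
                (Real.rpow_nonneg hs₀.le _)
    _ = R t / t ^ a * ((t ^ a - T ^ a) / a) := by
        rw [intervalIntegral.integral_const_mul, integral_rpow (Or.inl (by linarith)),
          sub_add_cancel]
    _ ≤ R t / t ^ a * (t ^ a / a) := by
        gcongr
        · exact div_nonneg hRt (Real.rpow_nonneg (hT.trans_le hTt).le a)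
        · exact sub_le_self _ (Real.rpow_nonneg hT.le a)
    _ = R t / a := by
        field_simp [(Real.rpow_pos_of_pos (hT.trans_le hTt) a).ne']

theorem tendsto_inv_smul_integral_smul_of_tendsto_norm_zero {E : Type*} [NormedAddCommGroup E]
    [NormedSpace ℝ E] {R w : ℝ → ℝ} {h : ℝ → E} {t₀ C : ℝ} (hR : Tendsto R atTop atTop)
    (hw : ∀ s ∈ Ici t₀, 0 ≤ w s) (hwi : ∀ t ∈ Ici t₀, IntervalIntegrable w volume t₀ t)
    (hwh : ∀ t ∈ Ici t₀, IntervalIntegrable (fun s => w s • h s) volume t₀ t)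
    (hwR : ∀ T t, t₀ ≤ T → T ≤ t → ∫ s in T..t, w s ≤ C * R t)
    (hh : Tendsto (fun t => ‖h t‖) atTop (𝓝 0)) :
    Tendsto (fun t => (R t)⁻¹ • ∫ s in t₀..t, w s • h s) atTop (𝓝 0) := by
  rw [NormedAddGroup.tendsto_nhds_zero]
  intro ε hε
  obtain ⟨δ, hδ, hCδ⟩ := exists_pos_mul_lt (half_pos hε) C
  obtain ⟨T₁, hT₁⟩ := eventually_atTop.1 (hh.eventually_le_const hδ)
  set T := max T₁ t₀
  have hT : t₀ ≤ T := le_max_right _ _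
  set I := ∫ s in t₀..T, w s • h s
  have hI : Tendsto (fun t => (R t)⁻¹ * ‖I‖) atTop (𝓝 0) := by
    simpa using hR.inv_tendsto_atTop.mul_const ‖I‖
  filter_upwards [eventually_ge_atTop T, hR.eventually_gt_atTop 0,
    hI.eventually_lt_const (half_pos hε)] with t hTt hRt hIt
  have htail : ‖∫ s in T..t, w s • h s‖ ≤ C * R t * δ := by
    calc ‖∫ s in T..t, w s • h s‖ ≤ ∫ s in T..t, w s * δ := by
          refine intervalIntegral.norm_integral_le_of_norm_le hTt (ae_of_all _ fun s hs => ?_)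
            (((hwi T hT).symm.trans (hwi t (hT.trans hTt))).mul_const δ)
          rw [norm_smul, Real.norm_of_nonneg (hw s (hT.trans hs.1.le))]
          exact mul_le_mul_of_nonneg_left (hT₁ s ((le_max_left _ _).trans hs.1.le))
            (hw s (hT.trans hs.1.le))
      _ ≤ C * R t * δ := by
          rw [intervalIntegral.integral_mul_const]
          exact mul_le_mul_of_nonneg_right (hwR T t hT hTt) hδ.le
  rw [← intervalIntegral.integral_add_adjacent_intervals (hwh T hT) ((hwh T hT).symm.trans
    (hwh t (hT.trans hTt))), norm_smul, norm_inv, Real.norm_of_nonneg hRt.le]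
  calc (R t)⁻¹ * ‖I + ∫ s in T..t, w s • h s‖
      ≤ (R t)⁻¹ * ‖I‖ + (R t)⁻¹ * (C * R t * δ) := by
        rw [← mul_add]; gcongr; exact (norm_add_le _ _).trans (by gcongr)
    _ = (R t)⁻¹ * ‖I‖ + C * δ := by field_simp
    _ < ε := by linarith

theorem stmt_5 {m : ℕ} (t₀ u₀ : ℝ) (ht₀ : 0 < t₀) (hu₀ : 0 < u₀)
    (u : ℝ → ℝ) (h : ℝ → EuclideanSpace ℝ (Fin m))
    (hu : LocallyIntegrableOn u (Set.Ici t₀))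
    (hub : ∀ t ∈ Set.Ici t₀, u₀ ≤ u t)
    (hh : LocallyIntegrableOn h (Set.Ici t₀))
    (hh0 : Tendsto (fun t => ‖h t‖) atTop (nhds 0)) :
    Tendsto
      (fun t =>
        (Real.exp (∫ s in t₀..t, u s / s))⁻¹ •
          ∫ s in t₀..t, (Real.exp (∫ σ in t₀..s, u σ / σ) / s) • h s)
      atTop (nhds 0) := by
  set R := fun t => Real.exp (∫ s in t₀..t, u s / s)
  have hmono := monotoneOn_exp_integral_div_rpow ht₀ hu hub
  have hg := hu.div_id isClosed_Ici.isLocallyClosed fun h => ht₀.not_ge h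
  have hw : ∀ t ∈ Ici t₀, ContinuousOn (fun s => R s / s) (uIcc t₀ t) := fun t ht =>
    have hR : ContinuousOn R (uIcc t₀ t) := Real.continuous_exp.comp_continuousOn
      (intervalIntegral.continuousOn_primitive_interval'
        (hg.intervalIntegrable_of_Ici le_rfl ht) left_mem_uIcc)
    hR.div (continuousOn_id' _) fun s hs => (ht₀.trans_le ((le_min le_rfl ht).trans hs.1)).ne'
  refine tendsto_inv_smul_integral_smul_of_tendsto_norm_zero (C := u₀⁻¹)
    (tendsto_atTop_of_monotoneOn_div_rpow hu₀ ht₀ (Real.exp_pos _) hmono)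
    (fun s hs => div_nonneg (Real.exp_pos _).le (ht₀.le.trans hs))
    (fun t ht => (hw t ht).intervalIntegrable)
    (fun t ht => (hh.intervalIntegrable_of_Ici le_rfl ht).continuousOn_smul (hw t ht))
    (fun T t hT hTt => ?_) hh0
  rw [inv_mul_eq_div]
  exact integral_div_le_div_of_monotoneOn_div_rpow hu₀ (ht₀.trans_le hT) hTt (Real.exp_pos _).le
    (hmono.mono fun s hs => hT.trans hs.1)
    ((hw t (hT.trans hTt)).mono
      (uIcc_subset_uIcc (mem_uIcc_of_le hT hTt) right_mem_uIcc)).intervalIntegrable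
end

section
/- Let u : [t₀, ∞) → ℝ be locally integrable with u(t) ≥ u₀ > 0 for all t, and R(t) := exp(∫_{t₀}^t u(s)/s ds). Then R(t) ≥ (t/t₀)^{u₀} for all t ≥ t₀, and for every T ∈ [t₀, t], (1/R(t)) ∫_T^t R(s)/s ds ≤ 1/u₀. -/
open Filter Topology MeasureTheory

theorem stmt_6 (t₀ u₀ : ℝ) (ht₀ : 0 < t₀) (hu₀ : 0 < u₀)
    (u : ℝ → ℝ)
    (hu : LocallyIntegrableOn u (Set.Ici t₀))
    (hub : ∀ t ∈ Set.Ici t₀, u₀ ≤ u t) :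
    (∀ t ∈ Set.Ici t₀,
        (t / t₀) ^ u₀ ≤ Real.exp (∫ s in t₀..t, u s / s)) ∧
      ∀ t ∈ Set.Ici t₀, ∀ T ∈ Set.Icc t₀ t,
        (Real.exp (∫ s in t₀..t, u s / s))⁻¹ *
            ∫ s in T..t, Real.exp (∫ σ in t₀..s, u σ / σ) / s ≤ 1 / u₀ := by
  -- integrability of u s / s on subintervals of [t₀, ∞)
  have hint : ∀ a b : ℝ, t₀ ≤ a → a ≤ b →
      IntervalIntegrable (fun s => u s / s) volume a b := by
    intro a b ha hab
    have hsub : Set.Icc a b ⊆ Set.Ici t₀ := fun x hx => le_trans ha hx.1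
    have h1 : IntegrableOn u (Set.Icc a b) volume :=
      hu.integrableOn_compact_subset hsub isCompact_Icc
    have h2 : IntegrableOn (fun s => (s)⁻¹ * u s) (Set.Icc a b) volume :=
      IntegrableOn.continuousOn_mul
        (ContinuousOn.inv₀ continuousOn_id (fun x hx =>
          ne_of_gt (lt_of_lt_of_le ht₀ (le_trans ha hx.1)))) h1 isCompact_Icc
    have h3 : IntegrableOn (fun s => u s / s) (Set.Icc a b) volume := by
      simpa [div_eq_mul_inv, mul_comm] using h2
    rw [intervalIntegrable_iff_integrableOn_Icc_of_le hab]
    exact h3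
  -- key comparison
  have hlog : ∀ a b : ℝ, t₀ ≤ a → a ≤ b →
      u₀ * Real.log (b / a) ≤ ∫ s in a..b, u s / s := by
    intro a b ha hab
    have ha0 : 0 < a := lt_of_lt_of_le ht₀ ha
    have h0 : (0:ℝ) ∉ Set.uIcc a b := by
      rw [Set.uIcc_of_le hab]
      intro h
      exact absurd h.1 (not_le.2 ha0)
    have e1 : ∫ s in a..b, u₀ / s = u₀ * Real.log (b / a) := by
      have hfe : (fun s : ℝ => u₀ / s) = fun s : ℝ => u₀ * (1 / s) := by
        funext s; rw [mul_one_div]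
      rw [hfe, intervalIntegral.integral_const_mul, integral_one_div h0]
    rw [← e1]
    apply intervalIntegral.integral_mono_on hab _ (hint a b ha hab)
    · intro x hx
      have hx0 : 0 < x := lt_of_lt_of_le ht₀ (le_trans ha hx.1)
      exact (div_le_div_iff_of_pos_right hx0).2 (hub x (le_trans ha hx.1))
    · -- integrability of u₀ / s
      apply ContinuousOn.intervalIntegrable
      apply ContinuousOn.div continuousOn_const continuousOn_id
      intro x hx
      rw [Set.uIcc_of_le hab] at hx
      exact ne_of_gt (lt_of_lt_of_le ht₀ (le_trans ha hx.1))
  set F : ℝ → ℝ := fun x => ∫ s in t₀..x, u s / s with hF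
  constructor
  · intro t ht
    have ht0 : 0 < t := lt_of_lt_of_le ht₀ ht
    have h1 : u₀ * Real.log (t / t₀) ≤ F t := hlog t₀ t le_rfl ht
    have h2 : (t / t₀) ^ u₀ = Real.exp (u₀ * Real.log (t / t₀)) := by
      rw [Real.rpow_def_of_pos (div_pos ht0 ht₀), mul_comm]
    rw [h2]
    exact Real.exp_le_exp.2 h1
  · intro t ht T hT
    have ht0 : 0 < t := lt_of_lt_of_le ht₀ ht
    have hT0 : 0 < T := lt_of_lt_of_le ht₀ hT.1
    have hFcont : ContinuousOn F (Set.Icc t₀ t) := by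
      have := intervalIntegral.continuousOn_primitive_interval
        (f := fun s => u s / s) (a := t₀) (b := t) (μ := volume)
        (by rw [Set.uIcc_of_le ht]
            exact (intervalIntegrable_iff_integrableOn_Icc_of_le ht).1 (hint t₀ t le_rfl ht))
      rwa [Set.uIcc_of_le ht] at this
    -- pointwise bound: exp(F s)/s ≤ exp(F t) * (s/t)^u₀ / s  on [T,t]
    have hpt : ∀ s ∈ Set.Icc T t, Real.exp (F s) / s ≤
        Real.exp (F t) * ((s / t) ^ u₀) / s := by
      intro s hs
      have hs0 : 0 < s := lt_of_lt_of_le hT0 hs.1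
      have hst : s ≤ t := hs.2
      have hts0 : t₀ ≤ s := le_trans hT.1 hs.1
      have hadd : F s + ∫ σ in s..t, u σ / σ = F t :=
        intervalIntegral.integral_add_adjacent_intervals
          (hint t₀ s le_rfl hts0) (hint s t hts0 hst)
      have hkey : u₀ * Real.log (t / s) ≤ ∫ σ in s..t, u σ / σ := hlog s t hts0 hst
      have h1 : F s ≤ F t - u₀ * Real.log (t / s) := by linarith
      have h2 : Real.exp (F s) ≤ Real.exp (F t) * (s / t) ^ u₀ := by
        calc Real.exp (F s) ≤ Real.exp (F t - u₀ * Real.log (t / s)) :=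
              Real.exp_le_exp.2 h1
          _ = Real.exp (F t) * (s / t) ^ u₀ := by
              have hlog' : Real.log (s / t) = -Real.log (t / s) := by
                rw [← Real.log_inv, inv_div]
              rw [Real.exp_sub, Real.rpow_def_of_pos (div_pos hs0 ht0), hlog', neg_mul,
                Real.exp_neg, mul_comm (Real.log (t / s)) u₀, div_eq_mul_inv]
      exact (div_le_div_iff_of_pos_right hs0).2 h2
    -- integrability of both sides
    have hLHS : IntervalIntegrable (fun s => Real.exp (F s) / s) volume T t := by
      apply ContinuousOn.intervalIntegrable
      rw [Set.uIcc_of_le hT.2]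
      apply ContinuousOn.div
      · exact Real.continuous_exp.comp_continuousOn
          (hFcont.mono (Set.Icc_subset_Icc_left hT.1))
      · exact continuousOn_id
      · intro x hx; exact ne_of_gt (lt_of_lt_of_le hT0 hx.1)
    have hRHS : IntervalIntegrable (fun s => Real.exp (F t) * ((s / t) ^ u₀) / s) volume T t := by
      apply ContinuousOn.intervalIntegrable
      rw [Set.uIcc_of_le hT.2]
      apply ContinuousOn.div
      · apply ContinuousOn.mul continuousOn_const
        apply ContinuousOn.rpow_const
        · exact ContinuousOn.div continuousOn_id continuousOn_const (fun x _ => ne_of_gt ht0)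
        · intro x hx
          exact Or.inl (ne_of_gt (div_pos (lt_of_lt_of_le hT0 hx.1) ht0))
      · exact continuousOn_id
      · intro x hx; exact ne_of_gt (lt_of_lt_of_le hT0 hx.1)
    have hmono : ∫ s in T..t, Real.exp (F s) / s ≤
        ∫ s in T..t, Real.exp (F t) * ((s / t) ^ u₀) / s :=
      intervalIntegral.integral_mono_on hT.2 hLHS hRHS hpt
    -- compute the RHS integral
    have hcongr : ∫ s in T..t, Real.exp (F t) * ((s / t) ^ u₀) / s =
        Real.exp (F t) / t ^ u₀ * ∫ s in T..t, s ^ (u₀ - 1) := by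
      rw [← intervalIntegral.integral_const_mul]
      apply intervalIntegral.integral_congr
      intro s hs
      rw [Set.uIcc_of_le hT.2] at hs
      have hs0 : 0 < s := lt_of_lt_of_le hT0 hs.1
      have htp : (0:ℝ) < t ^ u₀ := Real.rpow_pos_of_pos ht0 u₀
      show Real.exp (F t) * (s / t) ^ u₀ / s = Real.exp (F t) / t ^ u₀ * s ^ (u₀ - 1)
      rw [Real.div_rpow hs0.le ht0.le, Real.rpow_sub_one hs0.ne']
      field_simp
    have hval : ∫ s in T..t, s ^ (u₀ - 1) = (t ^ u₀ - T ^ u₀) / u₀ := by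
      rw [integral_rpow (Or.inl (by linarith)), sub_add_cancel]
    calc (Real.exp (F t))⁻¹ * ∫ s in T..t, Real.exp (F s) / s
        ≤ (Real.exp (F t))⁻¹ *
            (Real.exp (F t) / t ^ u₀ * ((t ^ u₀ - T ^ u₀) / u₀)) := by
          apply mul_le_mul_of_nonneg_left _ (inv_nonneg.2 (Real.exp_nonneg _))
          rw [← hval, ← hcongr]
          exact hmono
      _ = (t ^ u₀ - T ^ u₀) / (t ^ u₀ * u₀) := by
          have he : Real.exp (F t) ≠ 0 := Real.exp_ne_zero _
          have htp : (t:ℝ) ^ u₀ ≠ 0 := ne_of_gt (Real.rpow_pos_of_pos ht0 u₀)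
          field_simp
      _ ≤ 1 / u₀ := by
          have htp : (0:ℝ) < t ^ u₀ := Real.rpow_pos_of_pos ht0 u₀
          have hTp : (0:ℝ) ≤ T ^ u₀ := (Real.rpow_pos_of_pos hT0 u₀).le
          rw [div_le_div_iff₀ (by positivity) hu₀]
          nlinarith
end

section
/- Let x : [t₀, ∞) → ℝ^n be C¹ with ‖ẋ(t)‖ ≤ C/t for all t ≥ t₀ (with C > 0, t₀ > 0), and let Φ : ℝ^n → [0, ∞) be continuous with ∫_{t₀}^∞ t·Φ(x(t)) dt < ∞. If x has bounded range (so Φ is uniformly continuous on the closure K of the trajectory), then Φ(x(t)) → 0 as t → ∞. -/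
/-!
If `Φ (x t) ≥ ε` at some large time `t`, then, since the speed is at most `C / t`, the
trajectory moves by at most `C ρ` on the window `[t, (1 + ρ) t]`; by uniform continuity of `Φ` on
the bounded (hence relatively compact) trajectory, `Φ ∘ x ≥ ε / 2` on the whole window once `ρ` is
small. The window then contributes at least `(ε / 2) ρ t²` to `∫ t Φ (x t) dt`, which is
impossible for arbitrarily large `t`.
-/

open Filter Topology MeasureTheory Set

section Window

variable {E F : Type*} [NormedAddCommGroup E] [NormedSpace ℝ E] [PseudoMetricSpace F]

theorem dist_le_of_norm_deriv_le_div {f f' : ℝ → E} {C t s : ℝ} (hC : 0 ≤ C) (ht : 0 < t)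
    (hts : t ≤ s) (hf : ∀ u ∈ Icc t s, HasDerivAt f (f' u) u)
    (hf' : ∀ u ∈ Icc t s, ‖f' u‖ ≤ C / u) :
    dist (f s) (f t) ≤ C / t * (s - t) := by
  rw [dist_eq_norm]
  refine norm_image_sub_le_of_norm_deriv_le_segment' (fun u hu => (hf u hu).hasDerivWithinAt)
    (fun u hu => (hf' u (Ico_subset_Icc_self hu)).trans ?_) s ⟨hts, le_rfl⟩
  gcongr
  exact hu.1

theorem exists_dist_comp_le_on_Icc_mul {K : Set E} {Φ : E → F} (hΦ : UniformContinuousOn Φ K)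
    {x x' : ℝ → E} {t₀ C ε : ℝ} (ht₀ : 0 < t₀) (hC : 0 < C) (hε : 0 < ε)
    (hx : ∀ t ∈ Ici t₀, HasDerivAt x (x' t) t) (hspeed : ∀ t ∈ Ici t₀, ‖x' t‖ ≤ C / t)
    (hxK : ∀ t ∈ Ici t₀, x t ∈ K) :
    ∃ ρ > 0, ∀ t ∈ Ici t₀, ∀ s ∈ Icc t ((1 + ρ) * t), dist (Φ (x s)) (Φ (x t)) ≤ ε := by
  obtain ⟨δ, hδ, hΦδ⟩ := Metric.uniformContinuousOn_iff_le.mp hΦ ε hε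
  refine ⟨δ / C, by positivity, fun t ht s hs => ?_⟩
  have ht_pos : 0 < t := ht₀.trans_le ht
  have hwindow : Icc t s ⊆ Ici t₀ := fun u hu => ht.trans hu.1
  refine hΦδ _ (hxK s (hwindow ⟨hs.1, le_rfl⟩)) _ (hxK t ht) ?_
  calc dist (x s) (x t)
      ≤ C / t * (s - t) := dist_le_of_norm_deriv_le_div hC.le ht_pos hs.1
          (fun u hu => hx u (hwindow hu)) (fun u hu => hspeed u (hwindow hu))
    _ ≤ C / t * (δ / C * t) := by gcongr; linarith [hs.2]
    _ = δ := by field_simp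

end Window

theorem mul_mul_sq_le_setIntegral_Icc {g : ℝ → ℝ} {t ρ c : ℝ} (ht : 0 ≤ t) (hρ : 0 ≤ ρ)
    (hc : 0 ≤ c) (hg : ∀ s ∈ Icc t ((1 + ρ) * t), c ≤ g s)
    (hint : IntegrableOn (fun s => s * g s) (Icc t ((1 + ρ) * t))) :
    c * ρ * t ^ 2 ≤ ∫ s in Icc t ((1 + ρ) * t), s * g s := by
  have hvol : volume.real (Icc t ((1 + ρ) * t)) = ρ * t := by
    rw [Real.volume_real_Icc_of_le (by nlinarith)]
    ring
  calc c * ρ * t ^ 2 = t * c * volume.real (Icc t ((1 + ρ) * t)) := by rw [hvol]; ring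
    _ ≤ ∫ s in Icc t ((1 + ρ) * t), s * g s :=
      setIntegral_ge_of_const_le_real measurableSet_Icc measure_Icc_lt_top.ne
        (fun s hs => mul_le_mul hs.1 (hg s hs) hc (ht.trans hs.1)) hint

theorem stmt_7 {n : ℕ} (t₀ C : ℝ) (ht₀ : 0 < t₀) (hC : 0 < C)
    (x x' : ℝ → EuclideanSpace ℝ (Fin n))
    (Φ : EuclideanSpace ℝ (Fin n) → ℝ)
    (hx : ∀ t ∈ Set.Ici t₀, HasDerivAt x (x' t) t)
    (hspeed : ∀ t ∈ Set.Ici t₀, ‖x' t‖ ≤ C / t)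
    (hΦc : Continuous Φ)
    (hΦnn : ∀ y, 0 ≤ Φ y)
    (hint : IntegrableOn (fun t => t * Φ (x t)) (Set.Ici t₀))
    (hbdd : ∃ M, ∀ t ∈ Set.Ici t₀, ‖x t‖ ≤ M) :
    Tendsto (fun t => Φ (x t)) atTop (nhds 0) := by
  obtain ⟨M, hM⟩ := hbdd
  refine tendsto_order.2 ⟨fun a ha => .of_forall fun t => ha.trans_le (hΦnn _), fun ε hε => ?_⟩
  by_contra hnot
  have hspike : ∃ᶠ t in atTop, ε ≤ Φ (x t) := by simpa only [not_eventually, not_lt] using hnot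
  obtain ⟨ρ, hρ, hosc⟩ := exists_dist_comp_le_on_Icc_mul
    ((isCompact_closedBall 0 M).uniformContinuousOn_of_continuous hΦc.continuousOn)
    ht₀ hC (half_pos hε) hx hspeed (fun t ht => mem_closedBall_zero_iff.mpr (hM t ht))
  have hgrow : Tendsto (fun t : ℝ => ε / 2 * ρ * t ^ 2) atTop atTop :=
    (tendsto_pow_atTop two_ne_zero).const_mul_atTop (by positivity)
  obtain ⟨t, hεt, ht, hbig⟩ := (hspike.and_eventually ((eventually_ge_atTop t₀).and
    (hgrow.eventually_gt_atTop (∫ s in Ici t₀, s * Φ (x s))))).exists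
  have hwindow : Icc t ((1 + ρ) * t) ⊆ Ici t₀ := fun s hs => ht.trans hs.1
  have hpersist : ∀ s ∈ Icc t ((1 + ρ) * t), ε / 2 ≤ Φ (x s) := fun s hs => by
    have := abs_le.mp (Real.dist_eq _ _ ▸ hosc t ht s hs)
    linarith
  have hlower : ε / 2 * ρ * t ^ 2 ≤ ∫ s in Icc t ((1 + ρ) * t), s * Φ (x s) :=
    mul_mul_sq_le_setIntegral_Icc (ht₀.le.trans ht) hρ.le (half_pos hε).le hpersist
      (hint.mono_set hwindow)
  have hupper : ∫ s in Icc t ((1 + ρ) * t), s * Φ (x s) ≤ ∫ s in Ici t₀, s * Φ (x s) :=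
    setIntegral_mono_set hint
      ((ae_restrict_mem measurableSet_Ici).mono fun s hs => mul_nonneg (ht₀.le.trans hs) (hΦnn _))
      hwindow.eventuallyLE
  linarith
end

section
/- Let f : ℝ^n → ℝ be convex and continuously differentiable, x* a minimizer of f over {x : Ax = b}, and x : [t₀, ∞) → ℝ^n a bounded continuous curve such that D_f(x*, x(t)) = f(x*) - f(x(t)) - ⟨∇f(x(t)), x* - x(t)⟩ → 0 as t → ∞. Then ∇f(x(t)) → ∇f(x*) as t → ∞. -/
open Filter Topology
open scoped RealInnerProductSpace

/-!
The Bregman distance `y ↦ D_f(x*, y)` is continuous and the trajectory stays in a compact ball,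
so every cluster point `ȳ` of the trajectory satisfies `D_f(x*, ȳ) = 0`. For convex `f` this
forces `∇f(ȳ) = ∇f(x*)`: the function `z ↦ f z - ⟪∇f(ȳ), z⟫` is minimal at `ȳ` by the gradient
inequality, takes the same value at `x*`, hence is also minimal at `x*`, where its gradient
`∇f(x*) - ∇f(ȳ)` must vanish. Continuity of `∇f` then gives convergence of `∇f(x(t))`.
-/

section ClusterPoints

variable {ι X Y Z : Type*} [TopologicalSpace X] [TopologicalSpace Y] [TopologicalSpace Z]

theorem MapClusterPt.eq_of_tendsto [T2Space Z] {l : Filter ι} {u : ι → Z} {y z : Z}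
    (hy : MapClusterPt y l u) (hu : Tendsto u l (𝓝 z)) : y = z :=
  eq_of_nhds_neBot (ClusterPt.mono hy hu).neBot

theorem tendsto_comp_of_isCompact_of_eqOn_fiber [T2Space Z] {l : Filter ι} {u : ι → X}
    {K : Set X} (hK : IsCompact K) (huK : ∀ᶠ i in l, u i ∈ K)
    {D : X → Z} (hD : Continuous D) {d : Z} (hDu : Tendsto (D ∘ u) l (𝓝 d))
    {g : X → Y} (hg : Continuous g) {c : Y} (hgc : ∀ y ∈ K, D y = d → g y = c) :
    Tendsto (g ∘ u) l (𝓝 c) := by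
  refine tendsto_nhds.2 fun V hV hcV => ?_
  by_contra hnot
  have hfreq : ∃ᶠ i in l, u i ∈ K ∩ g ⁻¹' Vᶜ :=
    ((not_eventually.1 hnot).and_eventually huK).mono fun i hi => ⟨hi.2, hi.1⟩
  obtain ⟨y, ⟨hyK, hyV⟩, hy⟩ :=
    (hK.inter_right (hV.isClosed_compl.preimage hg)).exists_mapClusterPt_of_frequently hfreq
  have hDy : D y = d := (hy.continuousAt_comp hD.continuousAt).eq_of_tendsto hDu
  exact hyV (hgc y hyK hDy ▸ hcV)

end ClusterPoints

section Bregman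

variable {E : Type*} [NormedAddCommGroup E] [InnerProductSpace ℝ E]

theorem ConvexOn.le_apply_of_hasFDerivAt {s : Set E} {f : E → ℝ} {f' : E →L[ℝ] ℝ} {y z : E}
    (hf : ConvexOn ℝ s f) (hy : y ∈ s) (hz : z ∈ s) (hf' : HasFDerivAt f f' y) :
    f y + f' (z - y) ≤ f z := by
  set L : ℝ →ᵃ[ℝ] E := AffineMap.lineMap y z
  have hL0 : L 0 = y := AffineMap.lineMap_apply_zero y z
  have hL1 : L 1 = z := AffineMap.lineMap_apply_one y z
  have hconv : ConvexOn ℝ (L ⁻¹' s) (f ∘ L) := hf.comp_affineMap L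
  have hderiv : HasDerivAt (f ∘ L) (f' (z - y)) 0 :=
    (hL0 ▸ hf').comp_hasDerivAt 0 AffineMap.hasDerivAt_lineMap
  have hslope := hconv.le_slope_of_hasDerivAt (x := 0) (y := 1)
    (by simpa [hL0] using hy) (by simpa [hL1] using hz) one_pos hderiv
  rw [slope_def_field, Function.comp_apply, Function.comp_apply, hL0, hL1] at hslope
  linarith [hslope]

def bregmanDist (f : E → ℝ) (f' : E → E) (x y : E) : ℝ :=
  f x - f y - ⟪f' y, x - y⟫

theorem continuous_bregmanDist {f : E → ℝ} {f' : E → E} (hf : Continuous f)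
    (hf' : Continuous f') (x : E) : Continuous (bregmanDist f f' x) := by
  unfold bregmanDist
  fun_prop

variable [CompleteSpace E]

theorem ConvexOn.add_inner_le_of_hasGradientAt {f : E → ℝ} {g y : E}
    (hf : ConvexOn ℝ Set.univ f) (hg : HasGradientAt f g y) (z : E) :
    f y + ⟪g, z - y⟫ ≤ f z := by
  simpa using hf.le_apply_of_hasFDerivAt trivial trivial hg.hasFDerivAt

theorem ConvexOn.gradient_eq_of_bregmanDist_eq_zero {f : E → ℝ} {f' : E → E} {x y : E}
    (hf : ConvexOn ℝ Set.univ f) (hx : HasGradientAt f (f' x) x) (hy : HasGradientAt f (f' y) y)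
    (h : bregmanDist f f' x y = 0) : f' y = f' x := by
  set g : E → ℝ := fun z => f z - ⟪f' y, z⟫
  have hmin : IsMinOn g Set.univ x := fun z _ => by
    have hz := hf.add_inner_le_of_hasGradientAt hy z
    simp only [bregmanDist, inner_sub_right] at h hz
    show f x - ⟪f' y, x⟫ ≤ f z - ⟪f' y, z⟫
    linarith
  have hg : HasGradientAt g (f' x - f' y) x := by
    rw [hasGradientAt_iff_hasFDerivAt, map_sub]
    exact hx.hasFDerivAt.sub (InnerProductSpace.toDual ℝ E (f' y)).hasFDerivAt
  have hzero := (hmin.isLocalMin univ_mem).hasFDerivAt_eq_zero hg.hasFDerivAt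
  rw [map_eq_zero_iff _ (InnerProductSpace.toDual ℝ E).injective, sub_eq_zero] at hzero
  exact hzero.symm

end Bregman

theorem stmt_8_general {n : ℕ} (f : EuclideanSpace ℝ (Fin n) → ℝ)
    (f' : EuclideanSpace ℝ (Fin n) → EuclideanSpace ℝ (Fin n))
    (hconv : ConvexOn ℝ Set.univ f)
    (hdiff : ∀ x, HasGradientAt f (f' x) x)
    (hf'c : Continuous f')
    (xs : EuclideanSpace ℝ (Fin n))
    (t₀ : ℝ) (x : ℝ → EuclideanSpace ℝ (Fin n))
    (hxbdd : ∃ M, ∀ t ∈ Set.Ici t₀, ‖x t‖ ≤ M)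
    (hbreg :
      Tendsto (fun t => f xs - f (x t) - ⟪f' (x t), xs - x t⟫) atTop (nhds 0)) :
    Tendsto (fun t => f' (x t)) atTop (nhds (f' xs)) := by
  obtain ⟨M, hM⟩ := hxbdd
  have hfc : Continuous f :=
    continuous_iff_continuousAt.2 fun y => (hdiff y).differentiableAt.continuousAt
  have hxK : ∀ᶠ t in atTop, x t ∈ Metric.closedBall 0 M := by
    filter_upwards [eventually_ge_atTop t₀] with t ht
    exact mem_closedBall_zero_iff.2 (hM t ht)
  exact tendsto_comp_of_isCompact_of_eqOn_fiber (isCompact_closedBall 0 M) hxK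
    (continuous_bregmanDist hfc hf'c xs) hbreg hf'c
    fun y _ hy => hconv.gradient_eq_of_bregmanDist_eq_zero (hdiff xs) (hdiff y) hy

theorem stmt_8 {n m : ℕ} (f : EuclideanSpace ℝ (Fin n) → ℝ)
    (f' : EuclideanSpace ℝ (Fin n) → EuclideanSpace ℝ (Fin n))
    (hconv : ConvexOn ℝ Set.univ f)
    (hdiff : ∀ x, HasGradientAt f (f' x) x)
    (hf'c : Continuous f')
    (A : EuclideanSpace ℝ (Fin n) →L[ℝ] EuclideanSpace ℝ (Fin m))
    (b : EuclideanSpace ℝ (Fin m))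
    (xs : EuclideanSpace ℝ (Fin n))
    (hxs : IsMinOn f {x | A x = b} xs) (hxsfeas : A xs = b)
    (t₀ : ℝ) (x : ℝ → EuclideanSpace ℝ (Fin n))
    (hxc : ContinuousOn x (Set.Ici t₀))
    (hxbdd : ∃ M, ∀ t ∈ Set.Ici t₀, ‖x t‖ ≤ M)
    (hbreg :
      Tendsto (fun t => f xs - f (x t) - ⟪f' (x t), xs - x t⟫) atTop (nhds 0)) :
    Tendsto (fun t => f' (x t)) atTop (nhds (f' xs)) :=
  stmt_8_general f f' hconv hdiff hf'c xs t₀ x hxbdd hbreg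
end

section
/- Let α > 1, θ ∈ (0, 1/2), t₀ > 0, and δ : [t₀, ∞) → (0, ∞) be C¹ with inf_t t·δ'(t)/δ(t) > -∞ and sup_t t·δ'(t)/δ(t) < 1/θ - 2. Let r : [t₀, ∞) → ℝ^m be C¹ and define M(t) := t^{-(α-1)} ∫_{t₀}^t s^α δ(s)(r(s) + θ s ṙ(s)) ds. If M(t) → 0 as t → ∞, then t² δ(t) r(t) → 0 as t → ∞. -/
/-!
Put `h t = (t ^ 2 * δ t) • r t`, `u t = 1 / θ - 2 - t * δ' t / δ t` and `G = θ⁻¹ • M`.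
Differentiating the integral in `M`, one finds that `z = h - G` solves
`z' = -(u / t) • z + ((α - 1 - u) / t) • G`, i.e. `z' = (u / t) • (g - z)` with
`g = ((α - 1) / u - 1) • G`. The upper bound on `t * δ' t / δ t` is `u ≥ u₀ > 0`, so `g → 0` and
the integrating factor `Φ = exp ∫ u / s ≥ (t / t₁) ^ u₀` tends to infinity. Hence
`z = Φ⁻¹ • (Φ t₁ • z t₁ + ∫ Φ' • g)`, a weighted Cesàro mean of a function tending to `0`,
tends to `0`, and so does `h = z + G`.
-/

open Filter Topology Set MeasureTheory

theorem ContinuousOn.intervalIntegrable_of_mem_Ici {E : Type*} [NormedAddCommGroup E]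
    {f : ℝ → E} {a b c : ℝ}
    (hf : ContinuousOn f (Ici a)) (hb : a ≤ b) (hc : a ≤ c) : IntervalIntegrable f volume b c :=
  (hf.mono (ordConnected_Ici.uIcc_subset hb hc)).intervalIntegrable

section Calculus

variable {E : Type*} [NormedAddCommGroup E] [NormedSpace ℝ E]

theorem ContinuousOn.hasDerivAt_intervalIntegral_Ici [CompleteSpace E] {f : ℝ → E} {a x : ℝ}
    (hf : ContinuousOn f (Ici a)) (hx : a < x) :
    HasDerivAt (fun t => ∫ s in a..t, f s) (f x) x :=
  intervalIntegral.integral_hasDerivAt_right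
    (hf.intervalIntegrable_of_mem_Ici le_rfl hx.le)
    ((hf.mono Ioi_subset_Ici_self).stronglyMeasurableAtFilter isOpen_Ioi x hx)
    (hf.continuousAt (Ici_mem_nhds hx))

theorem ContinuousOn.continuousOn_intervalIntegral_Ici {f : ℝ → E} {a : ℝ}
    (hf : ContinuousOn f (Ici a)) : ContinuousOn (fun t => ∫ s in a..t, f s) (Ici a) := by
  intro x hx
  have hax : a ≤ x + 1 := by linarith [mem_Ici.1 hx]
  have hprim := intervalIntegral.continuousOn_primitive_interval (μ := volume)
    ((hf.mono (ordConnected_Ici.uIcc_subset le_rfl hax)).integrableOn_compact isCompact_uIcc)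
  refine (hprim x ?_).mono_of_mem_nhdsWithin ?_
  · rw [uIcc_of_le hax]; exact ⟨hx, by linarith⟩
  · rw [uIcc_of_le hax, ← Ici_inter_Iic]
    exact inter_mem_nhdsWithin _ (Iic_mem_nhds (by linarith))

theorem intervalIntegral.integral_eq_sub_of_hasDerivAt_Ici [CompleteSpace E] {F f : ℝ → E}
    {a b : ℝ}
    (hF : ContinuousOn F (Ici a)) (hderiv : ∀ x ∈ Ioi a, HasDerivAt F (f x) x)
    (hf : ContinuousOn f (Ici a)) (hab : a ≤ b) :
    ∫ s in a..b, f s = F b - F a :=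
  integral_eq_sub_of_hasDerivAt_of_le hab (hF.mono Icc_subset_Ici_self)
    (fun x hx => hderiv x hx.1) (hf.intervalIntegrable_of_mem_Ici le_rfl hab)

theorem tendsto_inv_smul_intervalIntegral_smul {w D : ℝ → ℝ} {G : ℝ → E} {t₁ : ℝ}
    (hw : ContinuousOn w (Ici t₁)) (hw0 : ∀ s ∈ Ici t₁, 0 ≤ w s) (hG : ContinuousOn G (Ici t₁))
    (hwD : ∀ t ∈ Ici t₁, ∫ s in t₁..t, w s ≤ D t) (hD : Tendsto D atTop atTop)
    (hG0 : Tendsto G atTop (𝓝 0)) :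
    Tendsto (fun t => (D t)⁻¹ • ∫ s in t₁..t, w s • G s) atTop (𝓝 0) := by
  rw [NormedAddGroup.tendsto_nhds_zero]
  intro ε hε
  obtain ⟨T, hT⟩ :=
    eventually_atTop.1 (NormedAddGroup.tendsto_nhds_zero.1 hG0 (ε / 2) (half_pos hε))
  set T₁ := max t₁ T
  have hT₁ : t₁ ≤ T₁ := le_max_left _ _
  have hwG : ∀ {b c}, t₁ ≤ b → t₁ ≤ c → IntervalIntegrable (fun s => w s • G s) volume b c :=
    (hw.smul hG).intervalIntegrable_of_mem_Ici
  set C := ‖∫ s in t₁..T₁, w s • G s‖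
  filter_upwards [eventually_ge_atTop T₁, hD.eventually_gt_atTop (2 * C / ε)] with t ht hDt
  have hDpos : 0 < D t := lt_of_le_of_lt (by positivity) hDt
  have htail : ‖∫ s in T₁..t, w s • G s‖ ≤ ε / 2 * D t :=
    calc ‖∫ s in T₁..t, w s • G s‖ ≤ ∫ s in T₁..t, ε / 2 * w s := by
          refine intervalIntegral.norm_integral_le_of_norm_le ht (ae_of_all _ fun s hs => ?_) ?_
          · have hs₁ : t₁ ≤ s := hT₁.trans hs.1.le
            rw [norm_smul, Real.norm_of_nonneg (hw0 s hs₁), mul_comm]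
            exact mul_le_mul_of_nonneg_right (hT s ((le_max_right _ _).trans hs.1.le)).le
              (hw0 s hs₁)
          · exact (hw.intervalIntegrable_of_mem_Ici hT₁ (hT₁.trans ht)).const_mul _
      _ = ε / 2 * ∫ s in T₁..t, w s := intervalIntegral.integral_const_mul _ _
      _ ≤ ε / 2 * D t := by
          have hw₁ := hw.intervalIntegrable_of_mem_Ici (le_refl t₁) hT₁
          have hhead : 0 ≤ ∫ s in t₁..T₁, w s :=
            intervalIntegral.integral_nonneg hT₁ fun s hs => hw0 s hs.1
          have hsplit := intervalIntegral.integral_add_adjacent_intervals hw₁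
            (hw.intervalIntegrable_of_mem_Ici hT₁ (hT₁.trans ht))
          gcongr
          linarith [hwD t (hT₁.trans ht)]
  rw [norm_smul, norm_inv, Real.norm_of_nonneg hDpos.le,
    ← intervalIntegral.integral_add_adjacent_intervals (hwG le_rfl hT₁) (hwG hT₁ (hT₁.trans ht))]
  calc (D t)⁻¹ * ‖(∫ s in t₁..T₁, w s • G s) + ∫ s in T₁..t, w s • G s‖
      ≤ (D t)⁻¹ * (C + ε / 2 * D t) := by gcongr; exact norm_add_le_of_le le_rfl htail
    _ = C / D t + ε / 2 := by field_simp
    _ < ε := by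
        rw [div_lt_iff₀ hε] at hDt
        have : C / D t < ε / 2 := by rw [div_lt_iff₀ hDpos]; linarith
        linarith

theorem tendsto_intervalIntegral_atTop_of_div_le {a : ℝ → ℝ} {t₁ c : ℝ} (ht₁ : 0 < t₁)
    (hc : 0 < c) (ha : ContinuousOn a (Ici t₁)) (hca : ∀ t ∈ Ici t₁, c / t ≤ a t) :
    Tendsto (fun t => ∫ s in t₁..t, a s) atTop atTop := by
  have hlog : Tendsto (fun t => c * Real.log (t / t₁)) atTop atTop :=
    (Real.tendsto_log_atTop.comp (tendsto_id.atTop_div_const ht₁)).const_mul_atTop hc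
  refine tendsto_atTop_mono' _ ?_ hlog
  filter_upwards [eventually_ge_atTop t₁] with t ht
  have h0 : (0 : ℝ) ∉ uIcc t₁ t := by rw [uIcc_of_le ht]; exact fun h => (ht₁.trans_le h.1).false
  calc c * Real.log (t / t₁) = ∫ s in t₁..t, c / s := by
        simp only [div_eq_mul_inv c, intervalIntegral.integral_const_mul, integral_inv h0]
    _ ≤ ∫ s in t₁..t, a s := by
        refine intervalIntegral.integral_mono_on ht ?_ (ha.intervalIntegrable_of_mem_Ici le_rfl ht)
          fun s hs => hca s hs.1
        exact (continuousOn_const.div continuousOn_id fun s hs => (ht₁.trans_le hs).ne')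
          |>.intervalIntegrable_of_mem_Ici le_rfl ht

theorem tendsto_zero_of_hasDerivAt_eq_smul_sub [CompleteSpace E] {a : ℝ → ℝ} {g z : ℝ → E}
    {t₁ : ℝ} (ha : ContinuousOn a (Ici t₁)) (ha0 : ∀ t ∈ Ici t₁, 0 ≤ a t)
    (hA : Tendsto (fun t => ∫ s in t₁..t, a s) atTop atTop)
    (hg : ContinuousOn g (Ici t₁)) (hg0 : Tendsto g atTop (𝓝 0))
    (hz : ∀ t ∈ Ici t₁, HasDerivAt z (a t • (g t - z t)) t) :
    Tendsto z atTop (𝓝 0) := by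
  set Φ : ℝ → ℝ := fun t => Real.exp (∫ s in t₁..t, a s)
  have hΦc : ContinuousOn Φ (Ici t₁) :=
    Real.continuous_exp.comp_continuousOn ha.continuousOn_intervalIntegral_Ici
  have hΦ : ∀ t ∈ Ioi t₁, HasDerivAt Φ (Φ t * a t) t :=
    fun t ht => (ha.hasDerivAt_intervalIntegral_Ici ht).exp
  have hw : ContinuousOn (fun t => Φ t * a t) (Ici t₁) := hΦc.mul ha
  have hweight : ∀ t ∈ Ici t₁, ∫ s in t₁..t, Φ s * a s ≤ Φ t := fun t ht => by
    rw [intervalIntegral.integral_eq_sub_of_hasDerivAt_Ici hΦc hΦ hw ht]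
    linarith [Real.exp_pos (∫ s in t₁..t₁, a s)]
  have hzc : ContinuousOn z (Ici t₁) := fun t ht => (hz t ht).continuousAt.continuousWithinAt
  have hsol : ∀ t ∈ Ici t₁, Φ t • z t = Φ t₁ • z t₁ + ∫ s in t₁..t, (Φ s * a s) • g s :=
    fun t ht => by
      rw [intervalIntegral.integral_eq_sub_of_hasDerivAt_Ici (hΦc.fun_smul hzc)
        (fun s hs => ?_) (hw.fun_smul hg) ht]
      · abel
      · exact ((hΦ s hs).smul (hz s (mem_Ici_of_Ioi hs))).congr_deriv (by module)
  have hΦtop : Tendsto Φ atTop atTop := Real.tendsto_exp_atTop.comp hA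
  have hfree : Tendsto (fun t => (Φ t)⁻¹ • Φ t₁ • z t₁) atTop (𝓝 0) := by
    simpa using hΦtop.inv_tendsto_atTop.smul_const (Φ t₁ • z t₁)
  have hforced := tendsto_inv_smul_intervalIntegral_smul hw
    (fun t ht => mul_nonneg (Real.exp_pos _).le (ha0 t ht)) hg hweight hΦtop hg0
  refine (zero_add (0 : E) ▸ hfree.add hforced).congr' ?_
  filter_upwards [eventually_ge_atTop t₁] with t ht
  rw [← smul_add, ← hsol t ht, inv_smul_smul₀ (Real.exp_pos _).ne']

theorem tendsto_zero_of_hasDerivAt_neg_div_smul_add [CompleteSpace E] {u : ℝ → ℝ}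
    {G z : ℝ → E} {t₁ u₀ b : ℝ} (ht₁ : 0 < t₁) (hu₀ : 0 < u₀) (hu : ContinuousOn u (Ici t₁))
    (hu₀u : ∀ t ∈ Ici t₁, u₀ ≤ u t) (hG : ContinuousOn G (Ici t₁)) (hG0 : Tendsto G atTop (𝓝 0))
    (hz : ∀ t ∈ Ici t₁, HasDerivAt z (-(u t / t) • z t + ((b - u t) / t) • G t) t) :
    Tendsto z atTop (𝓝 0) := by
  have hpos : ∀ t ∈ Ici t₁, 0 < t := fun t ht => ht₁.trans_le ht
  have hupos : ∀ t ∈ Ici t₁, 0 < u t := fun t ht => hu₀.trans_le (hu₀u t ht)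
  have ha : ContinuousOn (fun t => u t / t) (Ici t₁) :=
    hu.div continuousOn_id fun t ht => (hpos t ht).ne'
  have hcoeff : ∀ t ∈ Ici t₁, ‖b / u t - 1‖ ≤ |b| / u₀ + 1 := fun t ht =>
    calc ‖b / u t - 1‖ ≤ |b| / u t + 1 := by
          simpa [abs_div, abs_of_pos (hupos t ht)] using norm_sub_le (b / u t) 1
      _ ≤ |b| / u₀ + 1 := by gcongr; exact hu₀u t ht
  have hg0 : Tendsto (fun t => (b / u t - 1) • G t) atTop (𝓝 0) :=
    (isBoundedUnder_of_eventually_le (eventually_atTop.2 ⟨t₁, hcoeff⟩)).smul_tendsto_zero hG0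
  refine tendsto_zero_of_hasDerivAt_eq_smul_sub (g := fun t => (b / u t - 1) • G t) ha
    (fun t ht => div_nonneg (hupos t ht).le (hpos t ht).le)
    (tendsto_intervalIntegral_atTop_of_div_le ht₁ hu₀ ha fun t ht =>
      div_le_div_of_nonneg_right (hu₀u t ht) (hpos t ht).le)
    (((continuousOn_const.div hu fun t ht => (hupos t ht).ne').sub continuousOn_const).smul hG)
    hg0 fun t ht => (hz t ht).congr_deriv ?_
  have := (hupos t ht).ne'
  have := (hpos t ht).ne'
  match_scalars <;> field_simp

theorem hasDerivAt_sq_mul_smul {δ δ' : ℝ → ℝ} {r r' : ℝ → E} {α θ t : ℝ} (hθ : θ ≠ 0)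
    (ht : 0 < t) (hδt : δ t ≠ 0) (hδ : HasDerivAt δ (δ' t) t) (hr : HasDerivAt r (r' t) t) :
    HasDerivAt (fun s => (s ^ 2 * δ s) • r s)
      (θ⁻¹ • (t ^ (α - 1))⁻¹ • (t ^ α * δ t) • (r t + (θ * t) • r' t)
        - ((1 / θ - 2 - t * δ' t / δ t) / t) • (t ^ 2 * δ t) • r t) t := by
  have hpow : t ^ α = t ^ (α - 1) * t := by rw [Real.rpow_sub_one ht.ne']; field_simp
  have := Real.rpow_pos_of_pos ht (α - 1)
  refine (((hasDerivAt_pow 2 t).mul hδ).smul hr).congr_deriv ?_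
  rw [hpow, Pi.mul_apply]
  match_scalars <;> field_simp
  ring

theorem hasDerivAt_inv_rpow_smul {F : ℝ → E} {F' : E} {p t : ℝ} (ht : 0 < t)
    (hF : HasDerivAt F F' t) :
    HasDerivAt (fun s => (s ^ p)⁻¹ • F s) ((t ^ p)⁻¹ • F' - (p / t) • (t ^ p)⁻¹ • F t) t := by
  have := Real.rpow_pos_of_pos ht p
  refine (((Real.hasDerivAt_rpow_const (Or.inl ht.ne')).inv this.ne').smul hF).congr_deriv ?_
  rw [Real.rpow_sub_one ht.ne', Pi.inv_apply]
  match_scalars <;> field_simp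

theorem hasDerivAt_sq_mul_smul_sub_inv_rpow_smul {δ δ' : ℝ → ℝ} {r r' F : ℝ → E} {α θ t : ℝ}
    (hθ : θ ≠ 0) (ht : 0 < t) (hδt : δ t ≠ 0) (hδ : HasDerivAt δ (δ' t) t)
    (hr : HasDerivAt r (r' t) t) (hF : HasDerivAt F ((t ^ α * δ t) • (r t + (θ * t) • r' t)) t) :
    HasDerivAt (fun s => (s ^ 2 * δ s) • r s - θ⁻¹ • (s ^ (α - 1))⁻¹ • F s)
      (-((1 / θ - 2 - t * δ' t / δ t) / t) • ((t ^ 2 * δ t) • r t - θ⁻¹ • (t ^ (α - 1))⁻¹ • F t)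
        + ((α - 1 - (1 / θ - 2 - t * δ' t / δ t)) / t) • θ⁻¹ • (t ^ (α - 1))⁻¹ • F t) t :=
  ((hasDerivAt_sq_mul_smul hθ ht hδt hδ hr).sub
    ((hasDerivAt_inv_rpow_smul ht hF).const_smul θ⁻¹)).congr_deriv (by module)

end Calculus

theorem stmt_16_general {m : ℕ} (α θ t₀ : ℝ)
    (hθ : θ ∈ Set.Ioo (0 : ℝ) (1 / 2)) (ht₀ : 0 < t₀)
    (δ δ' : ℝ → ℝ)
    (hδpos : ∀ t ∈ Set.Ici t₀, 0 < δ t)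
    (hδ : ∀ t ∈ Set.Ici t₀, HasDerivAt δ (δ' t) t)
    (hδ'c : ContinuousOn δ' (Set.Ici t₀))
    (hρhigh : ∃ c : ℝ, c < 1 / θ - 2 ∧ ∀ t ∈ Set.Ici t₀, t * δ' t / δ t ≤ c)
    (r r' : ℝ → EuclideanSpace ℝ (Fin m))
    (hr : ∀ t ∈ Set.Ici t₀, HasDerivAt r (r' t) t)
    (hr'c : ContinuousOn r' (Set.Ici t₀))
    (hM : Tendsto
      (fun t => (t ^ (α - 1))⁻¹ •
        ∫ s in t₀..t, (s ^ α * δ s) • (r s + (θ * s) • r' s))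
      atTop (nhds 0)) :
    Tendsto (fun t => (t ^ 2 * δ t) • r t) atTop (nhds 0) := by
  obtain ⟨c, hc, hρ⟩ := hρhigh
  set f := fun s => (s ^ α * δ s) • (r s + (θ * s) • r' s)
  set G := fun t => θ⁻¹ • (t ^ (α - 1))⁻¹ • ∫ s in t₀..t, f s
  have hδc : ContinuousOn δ (Ici t₀) := fun t ht => (hδ t ht).continuousAt.continuousWithinAt
  have hrc : ContinuousOn r (Ici t₀) := fun t ht => (hr t ht).continuousAt.continuousWithinAt
  have hfc : ContinuousOn f (Ici t₀) :=
    ((continuousOn_id.rpow_const fun t ht => Or.inl (ht₀.trans_le ht).ne').mul hδc).smul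
      (hrc.add ((continuousOn_const.mul continuousOn_id).smul hr'c))
  have hu : ContinuousOn (fun t => 1 / θ - 2 - t * δ' t / δ t) (Ici t₀) :=
    continuousOn_const.sub ((continuousOn_id.mul hδ'c).div hδc fun t ht => (hδpos t ht).ne')
  have hF : ∀ t ∈ Ioi t₀, HasDerivAt (fun t => ∫ s in t₀..t, f s) (f t) t :=
    fun t ht => hfc.hasDerivAt_intervalIntegral_Ici ht
  have hG0 : Tendsto G atTop (𝓝 0) := by simpa using hM.const_smul θ⁻¹
  have hsub : Ici (t₀ + 1) ⊆ Ioi t₀ := Ici_subset_Ioi.2 (lt_add_one t₀)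
  have hz : Tendsto (fun t => (t ^ 2 * δ t) • r t - G t) atTop (𝓝 0) := by
    refine tendsto_zero_of_hasDerivAt_neg_div_smul_add (t₁ := t₀ + 1) (b := α - 1)
      (by linarith) (sub_pos.2 hc) (hu.mono (hsub.trans Ioi_subset_Ici_self))
      (fun t ht => by linarith [hρ t (Ioi_subset_Ici_self (hsub ht))])
      (fun t ht => ((hasDerivAt_inv_rpow_smul (ht₀.trans (hsub ht)) (hF t (hsub ht))).const_smul
        θ⁻¹).continuousAt.continuousWithinAt) hG0 (fun t ht => ?_)
    have ht₀t : t ∈ Ici t₀ := Ioi_subset_Ici_self (hsub ht)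
    exact hasDerivAt_sq_mul_smul_sub_inv_rpow_smul hθ.1.ne' (ht₀.trans (hsub ht))
      (hδpos t ht₀t).ne' (hδ t ht₀t) (hr t ht₀t) (hF t (hsub ht))
  simpa using hz.add hG0

theorem stmt_16 {m : ℕ} (α θ t₀ : ℝ) (hα : 1 < α)
    (hθ : θ ∈ Set.Ioo (0 : ℝ) (1 / 2)) (ht₀ : 0 < t₀)
    (δ δ' : ℝ → ℝ)
    (hδpos : ∀ t ∈ Set.Ici t₀, 0 < δ t)
    (hδ : ∀ t ∈ Set.Ici t₀, HasDerivAt δ (δ' t) t)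
    (hδ'c : ContinuousOn δ' (Set.Ici t₀))
    (hρlow : ∃ c : ℝ, ∀ t ∈ Set.Ici t₀, c ≤ t * δ' t / δ t)
    (hρhigh : ∃ c : ℝ, c < 1 / θ - 2 ∧ ∀ t ∈ Set.Ici t₀, t * δ' t / δ t ≤ c)
    (r r' : ℝ → EuclideanSpace ℝ (Fin m))
    (hr : ∀ t ∈ Set.Ici t₀, HasDerivAt r (r' t) t)
    (hr'c : ContinuousOn r' (Set.Ici t₀))
    (hM : Tendsto
      (fun t => (t ^ (α - 1))⁻¹ •
        ∫ s in t₀..t, (s ^ α * δ s) • (r s + (θ * s) • r' s))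
      atTop (nhds 0)) :
    Tendsto (fun t => (t ^ 2 * δ t) • r t) atTop (nhds 0) :=
  stmt_16_general α θ t₀ hθ ht₀ δ δ' hδpos hδ hδ'c hρhigh r r' hr hr'c hM
end

section
/- Let u : [t₀, ∞) → ℝ be continuous with u(t) ≥ u₀ > 0, a : [t₀, ∞) → ℝ bounded continuous, p : [t₀, ∞) → ℝ^m continuous with p(t) → 0, and let Q : [t₀, ∞) → ℝ^m be the C¹ solution of Q'(t) + (u(t)/t)Q(t) = (a(t)/t)p(t) with Q(t₀) = 0 (t₀ > 0). Then Q(t) → 0 as t → ∞. -/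
/-!
With `c = u / t` and `w = (a / u) • p` the equation reads `Q' = c • (w - Q)`: `Q` relaxes towards
`w → 0` at rate `c`. If `φ' = c`, the fencing theorem applied to `exp φ • Q` gives
`‖Q t‖ ≤ exp (φ T - φ t) * ‖Q T‖ + sup_{[T, t]} ‖w‖`, and `φ → ∞` because `c ≥ u₀ / t` is not
integrable at infinity.
-/

open Filter Topology Set Real

theorem norm_le_exp_mul_norm_add_of_hasDerivAt_smul_sub {E : Type*} [NormedAddCommGroup E]
    [NormedSpace ℝ E] {φ c : ℝ → ℝ} {w y : ℝ → E} {K T t : ℝ} (hTt : T ≤ t)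
    (hφ : ∀ s ∈ Icc T t, HasDerivAt φ (c s) s)
    (hy : ∀ s ∈ Icc T t, HasDerivAt y (c s • (w s - y s)) s)
    (hc : ∀ s ∈ Icc T t, 0 ≤ c s) (hw : ∀ s ∈ Icc T t, ‖w s‖ ≤ K) :
    ‖y t‖ ≤ exp (φ T - φ t) * ‖y T‖ + K := by
  have hF : ∀ s ∈ Icc T t,
      HasDerivAt (fun s => exp (φ s) • y s) ((exp (φ s) * c s) • w s) s := by
    intro s hs
    exact ((hφ s hs).exp.smul (hy s hs)).congr_deriv (by module)
  have hB : ∀ s ∈ Icc T t, HasDerivAt (fun s => exp (φ T) * ‖y T‖ + K * (exp (φ s) - exp (φ T)))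
      (K * (exp (φ s) * c s)) s := fun s hs =>
    (((hφ s hs).exp.sub_const _).const_mul K).const_add _
  have hK : 0 ≤ K := (norm_nonneg _).trans (hw T (left_mem_Icc.2 hTt))
  have fence := image_norm_le_of_norm_deriv_right_le_deriv_boundary'
    (fun s hs => (hF s hs).continuousAt.continuousWithinAt)
    (fun s hs => (hF s (Ico_subset_Icc_self hs)).hasDerivWithinAt)
    (by simp [norm_smul, abs_of_pos (exp_pos _)])
    (fun s hs => (hB s hs).continuousAt.continuousWithinAt)
    (fun s hs => (hB s (Ico_subset_Icc_self hs)).hasDerivWithinAt)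
    (fun s hs => by
      have hs := Ico_subset_Icc_self hs
      rw [norm_smul, Real.norm_of_nonneg (mul_nonneg (exp_pos _).le (hc s hs)), mul_comm K]
      exact mul_le_mul_of_nonneg_left (hw s hs) (mul_nonneg (exp_pos _).le (hc s hs)))
    (right_mem_Icc.2 hTt)
  rw [norm_smul, Real.norm_of_nonneg (exp_pos _).le] at fence
  refine le_of_mul_le_mul_left ?_ (exp_pos (φ t))
  rw [mul_add, ← mul_assoc, ← exp_add, add_sub_cancel]
  nlinarith [exp_pos (φ T)]

theorem tendsto_zero_of_hasDerivAt_smul_sub {E : Type*} [NormedAddCommGroup E]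
    [NormedSpace ℝ E] {φ c : ℝ → ℝ} {w y : ℝ → E}
    (hφ : ∀ᶠ t in atTop, HasDerivAt φ (c t) t) (hφ_top : Tendsto φ atTop atTop)
    (hy : ∀ᶠ t in atTop, HasDerivAt y (c t • (w t - y t)) t)
    (hc : ∀ᶠ t in atTop, 0 ≤ c t) (hw : Tendsto w atTop (𝓝 0)) :
    Tendsto y atTop (𝓝 0) := by
  rw [NormedAddGroup.tendsto_nhds_zero]
  intro ε hε
  have hw_small := (NormedAddGroup.tendsto_nhds_zero.1 hw (ε / 2) (half_pos hε)).mono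
    fun _ h => h.le
  obtain ⟨T, hT⟩ := eventually_atTop.1 (hφ.and (hy.and (hc.and hw_small)))
  have hdecay : Tendsto (fun t => exp (φ T - φ t) * ‖y T‖) atTop (𝓝 0) := by
    simpa [sub_eq_add_neg] using ((tendsto_exp_atBot.comp
      (tendsto_atBot_add_const_left _ (φ T) (tendsto_neg_atTop_atBot.comp hφ_top))).mul_const
      ‖y T‖)
  filter_upwards [hdecay.eventually (gt_mem_nhds (half_pos hε)), eventually_ge_atTop T]
    with t hsmall hTt
  have := norm_le_exp_mul_norm_add_of_hasDerivAt_smul_sub hTt (fun s hs => (hT s hs.1).1)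
    (fun s hs => (hT s hs.1).2.1) (fun s hs => (hT s hs.1).2.2.1) (fun s hs => (hT s hs.1).2.2.2)
  linarith

theorem tendsto_integral_atTop_of_div_le {t₀ u₀ : ℝ} (ht₀ : 0 < t₀) (hu₀ : 0 < u₀) {c : ℝ → ℝ}
    (hc : ContinuousOn c (Ici t₀)) (hle : ∀ t ∈ Ici t₀, u₀ / t ≤ c t) :
    Tendsto (fun t => ∫ s in t₀..t, c s) atTop atTop := by
  have hlog : Tendsto (fun t => u₀ * log (t / t₀)) atTop atTop :=
    (tendsto_log_atTop.comp (tendsto_id.atTop_div_const ht₀)).const_mul_atTop hu₀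
  refine tendsto_atTop_mono' atTop ?_ hlog
  filter_upwards [eventually_ge_atTop t₀] with t ht
  have hpos : ∀ s ∈ Icc t₀ t, 0 < s := fun s hs => ht₀.trans_le hs.1
  calc u₀ * log (t / t₀) = ∫ s in t₀..t, u₀ / s := by
        simp only [div_eq_mul_inv u₀, intervalIntegral.integral_const_mul,
          integral_inv_of_pos ht₀ (ht₀.trans_le ht)]
    _ ≤ ∫ s in t₀..t, c s := by
        refine intervalIntegral.integral_mono_on ht ?_ ?_ fun s hs => hle s hs.1
        · exact ContinuousOn.intervalIntegrable_of_Icc ht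
            (continuousOn_const.div continuousOn_id fun s hs => (hpos s hs).ne')
        · exact (hc.mono Icc_subset_Ici_self).intervalIntegrable_of_Icc ht

theorem stmt_17_general {m : ℕ} (t₀ u₀ : ℝ) (ht₀ : 0 < t₀) (hu₀ : 0 < u₀)
    (u a : ℝ → ℝ) (p Q Q' : ℝ → EuclideanSpace ℝ (Fin m))
    (huc : ContinuousOn u (Set.Ici t₀))
    (hub : ∀ t ∈ Set.Ici t₀, u₀ ≤ u t)
    (habdd : ∃ Ca, ∀ t ∈ Set.Ici t₀, |a t| ≤ Ca)
    (hp0 : Tendsto p atTop (nhds 0))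
    (hQ : ∀ t ∈ Set.Ici t₀, HasDerivAt Q (Q' t) t)
    (hode : ∀ t ∈ Set.Ici t₀, Q' t + (u t / t) • Q t = (a t / t) • p t) :
    Tendsto Q atTop (nhds 0) := by
  obtain ⟨Ca, hCa⟩ := habdd
  have hpos : ∀ t ∈ Ici t₀, 0 < t := fun t ht => ht₀.trans_le ht
  have hu_pos : ∀ t ∈ Ici t₀, 0 < u t := fun t ht => hu₀.trans_le (hub t ht)
  have hc : ContinuousOn (fun t => u t / t) (Ici t₀) :=
    huc.div continuousOn_id fun t ht => (hpos t ht).ne'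
  have hc_ge : ∀ t ∈ Ici t₀, u₀ / t ≤ u t / t := fun t ht =>
    div_le_div_of_nonneg_right (hub t ht) (hpos t ht).le
  -- the equation says `Q' = (u / t) • (w - Q)` with target `w = (a / u) • p`
  have hw : Tendsto (fun t => (a t / u t) • p t) atTop (𝓝 0) := by
    refine IsBoundedUnder.smul_tendsto_zero (isBoundedUnder_of_eventually_le (a := Ca / u₀) ?_) hp0
    filter_upwards [eventually_ge_atTop t₀] with t ht
    simp only [Function.comp, Real.norm_eq_abs, abs_div, abs_of_pos (hu_pos t ht)]
    exact div_le_div₀ ((abs_nonneg _).trans (hCa t ht)) (hCa t ht) hu₀ (hub t ht)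
  refine tendsto_zero_of_hasDerivAt_smul_sub (φ := fun t => ∫ s in t₀..t, u s / s)
    (c := fun t => u t / t) ?_
    (tendsto_integral_atTop_of_div_le ht₀ hu₀ hc hc_ge) ?_ ?_ hw
  · filter_upwards [eventually_gt_atTop t₀] with t ht
    exact intervalIntegral.integral_hasDerivAt_right
      ((hc.mono Icc_subset_Ici_self).intervalIntegrable_of_Icc ht.le)
      ((hc.mono Ioi_subset_Ici_self).stronglyMeasurableAtFilter isOpen_Ioi t ht)
      (hc.continuousAt (Ici_mem_nhds ht))
  · filter_upwards [eventually_ge_atTop t₀] with t ht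
    refine (hQ t ht).congr_deriv ?_
    have hcoef : u t / t * (a t / u t) = a t / t := by field_simp [(hu_pos t ht).ne']
    rw [smul_sub, smul_smul, hcoef, ← hode t ht, add_sub_cancel_right]
  · filter_upwards [eventually_ge_atTop t₀] with t ht
    exact (div_pos hu₀ (hpos t ht)).le.trans (hc_ge t ht)

theorem stmt_17 {m : ℕ} (t₀ u₀ : ℝ) (ht₀ : 0 < t₀) (hu₀ : 0 < u₀)
    (u a : ℝ → ℝ) (p Q Q' : ℝ → EuclideanSpace ℝ (Fin m))
    (huc : ContinuousOn u (Set.Ici t₀))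
    (hub : ∀ t ∈ Set.Ici t₀, u₀ ≤ u t)
    (hac : ContinuousOn a (Set.Ici t₀))
    (habdd : ∃ Ca, ∀ t ∈ Set.Ici t₀, |a t| ≤ Ca)
    (hpc : ContinuousOn p (Set.Ici t₀))
    (hp0 : Tendsto p atTop (nhds 0))
    (hQ : ∀ t ∈ Set.Ici t₀, HasDerivAt Q (Q' t) t)
    (hode : ∀ t ∈ Set.Ici t₀, Q' t + (u t / t) • Q t = (a t / t) • p t)
    (hQ0 : Q t₀ = 0) :
    Tendsto Q atTop (nhds 0) :=
  stmt_17_general t₀ u₀ ht₀ hu₀ u a p Q Q' huc hub habdd hp0 hQ hode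
end
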